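/- arXiv:2409.03305 — 9 statements merged into one kernel-verified Lean document; each statement's English description precedes it below -/
import Mathlib

section
/- Let G be a finite group and V a finite-dimensional F_q G-module of dimension d. Then the proportion of derangements of the affine group V ⋊ G acting on V equals 1 - (1/|G|) ∑_{g∈G} 1/|Fix_V(g)|, where Fix_V(g) = {v ∈ V : g·v = v}. -/
open Finset

/-- For a finite group `G` and a finite-dimensional `F_q G`-module `V`
(given by a representation `ρ`), the proportion of derangements of the affine group
`V ⋊ G` acting on `V` (pairs `(g, w)` acting by `v ↦ ρ g v + w`) equals
`1 - (1/|G|) ∑_{g ∈ G} 1/|Fix_V(g)|`. -/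
theorem stmt_0 (F : Type*) [Field F] [Fintype F] (G : Type*) [Group G] [Fintype G]
    (V : Type*) [AddCommGroup V] [Module F V] [Fintype V] [DecidableEq V]
    (ρ : Representation F G V) :
    ((univ.filter (fun p : G × V => ∀ v : V, ρ p.1 v + p.2 ≠ v)).card : ℝ) /
        (Fintype.card G * Fintype.card V) =
      1 - (1 / (Fintype.card G : ℝ)) *
        ∑ g : G, 1 / ((univ.filter (fun v : V => ρ g v = v)).card : ℝ) := by
  classical
  have hV : (0:ℝ) < Fintype.card V := by exact_mod_cast Fintype.card_pos
  have hG : (0:ℝ) < Fintype.card G := by exact_mod_cast Fintype.card_pos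
  have hsplit : (univ.filter (fun p : G × V => ∀ v : V, ρ p.1 v + p.2 ≠ v)).card
      = ∑ g : G, (univ.filter (fun w : V => ∀ v : V, ρ g v + w ≠ v)).card := by
    rw [Finset.card_filter, Fintype.sum_prod_type]
    exact Finset.sum_congr rfl fun g _ => (Finset.card_filter _ _).symm
  have key : ∀ g : G,
      ((univ.filter (fun w : V => ∀ v : V, ρ g v + w ≠ v)).card : ℝ) / (Fintype.card V : ℝ)
        = 1 - 1 / ((univ.filter (fun v : V => ρ g v = v)).card : ℝ) := by
    intro g
    set f : V →ₗ[F] V := LinearMap.id - ρ g with hf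
    have hker : (univ.filter (fun v : V => ρ g v = v)).card
        = Fintype.card (LinearMap.ker f) := by
      refine (Fintype.card_of_subtype _ fun v => ?_).symm
      simp only [Finset.mem_filter, Finset.mem_univ, true_and, LinearMap.mem_ker, hf,
        LinearMap.sub_apply, LinearMap.id_apply, sub_eq_zero]
      exact eq_comm
    have hrange : (univ.filter (fun w : V => ∃ v : V, ρ g v + w = v)).card
        = Fintype.card (LinearMap.range f) := by
      refine (Fintype.card_of_subtype _ fun w => ?_).symm
      simp only [LinearMap.mem_range, Finset.mem_filter, Finset.mem_univ, true_and, hf,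
        LinearMap.sub_apply, LinearMap.id_apply]
      constructor
      · rintro ⟨v, hv⟩; exact ⟨v, by rw [sub_eq_iff_eq_add, add_comm]; exact hv.symm⟩
      · rintro ⟨v, hv⟩; exact ⟨v, by rw [← hv]; abel⟩
    have hmul : Fintype.card (LinearMap.range f) * Fintype.card (LinearMap.ker f)
        = Fintype.card V := by
      have h1 := Submodule.card_eq_card_quotient_mul_card (LinearMap.ker f)
      have h2 : Nat.card (V ⧸ LinearMap.ker f) = Nat.card (LinearMap.range f) :=
        Nat.card_congr f.quotKerEquivRange.toEquiv
      rw [h2] at h1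
      simpa [Nat.card_eq_fintype_card, mul_comm] using h1.symm
    have hcompl : (univ.filter (fun w : V => ∀ v : V, ρ g v + w ≠ v)).card
        + Fintype.card (LinearMap.range f) = Fintype.card V := by
      rw [← hrange]
      have h := Finset.card_filter_add_card_filter_not
        (s := (univ : Finset V)) (p := fun w : V => ∃ v : V, ρ g v + w = v)
      simpa [not_exists, Finset.card_univ, add_comm] using h
    have hkpos : (0:ℝ) < ((univ.filter (fun v : V => ρ g v = v)).card : ℝ) := by
      have : 0 < Fintype.card (LinearMap.ker f) := Fintype.card_pos
      rw [hker]; exact_mod_cast this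
    have hrpos : (0:ℝ) < (Fintype.card (LinearMap.range f) : ℝ) := by
      exact_mod_cast (Fintype.card_pos : 0 < Fintype.card (LinearMap.range f))
    have hcard : ((univ.filter (fun w : V => ∀ v : V, ρ g v + w ≠ v)).card : ℝ)
        = (Fintype.card V : ℝ) - (Fintype.card (LinearMap.range f) : ℝ) := by
      have := congrArg (Nat.cast (R := ℝ)) hcompl
      push_cast at this
      linarith
    have hmulR : (Fintype.card (LinearMap.range f) : ℝ)
        * ((univ.filter (fun v : V => ρ g v = v)).card : ℝ) = (Fintype.card V : ℝ) := by
      rw [hker]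
      exact_mod_cast hmul
    have hr : (Fintype.card (LinearMap.range f) : ℝ) / (Fintype.card V : ℝ)
        = 1 / ((univ.filter (fun v : V => ρ g v = v)).card : ℝ) := by
      rw [div_eq_div_iff hV.ne' hkpos.ne', one_mul]
      exact hmulR
    rw [hcard, sub_div, div_self hV.ne', hr]
  rw [hsplit]
  push_cast
  have lhs_eq : (∑ g : G, ((univ.filter (fun w : V => ∀ v : V, ρ g v + w ≠ v)).card : ℝ))
      / ((Fintype.card G : ℝ) * (Fintype.card V : ℝ))
      = (1 / (Fintype.card G : ℝ)) * ∑ g : G,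
        ((univ.filter (fun w : V => ∀ v : V, ρ g v + w ≠ v)).card : ℝ) / (Fintype.card V : ℝ) := by
    rw [Finset.sum_div, Finset.mul_sum]
    congr 1
    ext g
    ring
  rw [lhs_eq]
  simp_rw [key]
  rw [Finset.sum_sub_distrib, Finset.sum_const, Finset.card_univ, nsmul_eq_mul, mul_one,
    mul_sub, one_div_mul_cancel (ne_of_gt hG)]
end

section
/- Let G be a finite group acting linearly on a finite F_q-vector space V. Let α(G) be the proportion of elements of G having eigenvalue 1 on V (i.e., fixing some nonzero vector), and δ the proportion of derangements of V ⋊ G acting on V. Then (1 - 1/q)·α(G) ≤ δ ≤ α(G). -/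
/-!
For `g ∈ G`, the affine map `v ↦ g v + w` has a fixed point exactly when `w` lies in the image
of `1 - g`, so by rank–nullity a proportion `1 - 1 / |ker (1 - g)|` of the translations `w` give
derangements. This proportion is `0` when `g` fixes no nonzero vector, and otherwise lies between
`1 - 1/q` and `1`, since `ker (1 - g)` is then a nonzero `F_q`-space. Averaging over `G` gives both
bounds.
-/

open Finset

theorem LinearMap.card_range_mul_card_ker {R M N : Type*} [Ring R] [AddCommGroup M] [Module R M]
    [AddCommGroup N] [Module R N] (f : M →ₗ[R] N) :
    Nat.card (range f) * Nat.card (ker f) = Nat.card M := by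
  rw [Submodule.card_eq_card_quotient_mul_card (ker f), mul_comm,
    Nat.card_congr f.quotKerEquivRange.toEquiv]

theorem Module.natCard_le_natCard_of_ne_zero (R : Type*) {M : Type*} [Ring R] [IsDomain R]
    [AddCommGroup M] [Module R M] [Module.IsTorsionFree R M] [Finite M] {v : M} (hv : v ≠ 0) :
    Nat.card R ≤ Nat.card M :=
  Nat.card_le_card_of_injective _ (smul_left_injective R hv)

namespace Module.End

variable {R M : Type*} [Ring R] [AddCommGroup M] [Module R M]

theorem exists_apply_add_eq_self_iff (f : Module.End R M) (w : M) :
    (∃ v, f v + w = v) ↔ w ∈ LinearMap.range (1 - f) :=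
  exists_congr fun _ => (sub_eq_iff_eq_add'.trans eq_comm).symm

theorem ker_one_sub_eq_bot_iff (f : Module.End R M) :
    LinearMap.ker (1 - f) = ⊥ ↔ ∀ v, f v = v → v = 0 := by
  rw [LinearMap.ker_eq_bot']
  exact forall_congr' fun _ => imp_congr_left (sub_eq_zero.trans eq_comm)

section Finite

variable [Fintype M] [DecidableEq M]

theorem card_filter_forall_apply_add_ne_add_card_range (f : Module.End R M) :
    #{w | ∀ v, f v + w ≠ v} + Nat.card (LinearMap.range (1 - f)) = Nat.card M := by
  classical
  have hfree : ({w | ∀ v, f v + w ≠ v} : Finset M) =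
      ({w | w ∉ LinearMap.range (1 - f)} : Finset M) :=
    filter_congr fun w _ => by simp only [← exists_apply_add_eq_self_iff, not_exists]
  rw [hfree, add_comm, Nat.card_eq_fintype_card, Fintype.card_subtype,
    card_filter_add_card_filter_not, card_univ, Nat.card_eq_fintype_card]

theorem card_filter_forall_apply_add_ne (f : Module.End R M) :
    (#{w | ∀ v, f v + w ≠ v} : ℝ) = Nat.card M * (1 - 1 / Nat.card (LinearMap.ker (1 - f))) := by
  have hcompl : (#{w | ∀ v, f v + w ≠ v} : ℝ) + Nat.card (LinearMap.range (1 - f)) =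
      Nat.card M := by
    exact_mod_cast f.card_filter_forall_apply_add_ne_add_card_range
  have hsplit : (Nat.card (LinearMap.range (1 - f)) : ℝ) * Nat.card (LinearMap.ker (1 - f)) =
      Nat.card M := by
    exact_mod_cast (1 - f).card_range_mul_card_ker
  have hker : (Nat.card (LinearMap.ker (1 - f)) : ℝ) ≠ 0 := Nat.cast_ne_zero.2 Nat.card_pos.ne'
  field_simp
  linear_combination Nat.card (LinearMap.ker (1 - f)) * hcompl - hsplit

theorem one_sub_inv_card_ker_one_sub_le (f : Module.End R M) :
    1 - 1 / (Nat.card (LinearMap.ker (1 - f)) : ℝ) ≤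
      if ∃ v : M, v ≠ 0 ∧ f v = v then 1 else 0 := by
  split_ifs with h
  · exact sub_le_self _ (by positivity)
  · rw [(ker_one_sub_eq_bot_iff f).2 fun v hv => by_contra fun hv0 => h ⟨v, hv0, hv⟩]
    simp

theorem le_one_sub_inv_card_ker_one_sub [IsDomain R] [Finite R] [Module.IsTorsionFree R M]
    (f : Module.End R M) :
    (1 - 1 / (Nat.card R : ℝ)) * (if ∃ v : M, v ≠ 0 ∧ f v = v then 1 else 0) ≤
      1 - 1 / (Nat.card (LinearMap.ker (1 - f)) : ℝ) := by
  split_ifs with h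
  · obtain ⟨v, hv, hfv⟩ := h
    have hvker : (⟨v, by simp [hfv]⟩ : LinearMap.ker (1 - f)) ≠ 0 := by simpa using hv
    have hR : (Nat.card R : ℝ) ≤ Nat.card (LinearMap.ker (1 - f)) := by
      exact_mod_cast Module.natCard_le_natCard_of_ne_zero R hvker
    have hR0 : (0 : ℝ) < Nat.card R := Nat.cast_pos.2 Nat.card_pos
    rw [mul_one]
    gcongr
  · rw [mul_zero, sub_nonneg]
    exact div_le_one_of_le₀ (by exact_mod_cast Nat.card_pos) (by positivity)

end Finite

end Module.End

/-- `(1 - 1/q) · α(G) ≤ δ ≤ α(G)`, where `α(G)` is the proportion of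
elements of `G` with eigenvalue 1 on `V`, and `δ` is the proportion of derangements
of the affine group `V ⋊ G` acting on `V`. -/
theorem stmt_1 (F : Type*) [Field F] [Fintype F] (G : Type*) [Group G] [Fintype G]
    (V : Type*) [AddCommGroup V] [Module F V] [Fintype V] [DecidableEq V]
    (ρ : Representation F G V)
    (α δ : ℝ)
    (hα : α = ((univ.filter (fun g : G => ∃ v : V, v ≠ 0 ∧ ρ g v = v)).card : ℝ) /
        (Fintype.card G))
    (hδ : δ = ((univ.filter (fun p : G × V => ∀ v : V, ρ p.1 v + p.2 ≠ v)).card : ℝ) /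
        (Fintype.card G * Fintype.card V)) :
    (1 - 1 / (Fintype.card F : ℝ)) * α ≤ δ ∧ δ ≤ α := by
  set fixed : G → ℝ := fun g => if ∃ v : V, v ≠ 0 ∧ ρ g v = v then 1 else 0
  set deranged : G → ℝ := fun g => 1 - 1 / (Nat.card (LinearMap.ker (1 - ρ g)) : ℝ)
  have hα' : α = (∑ g, fixed g) / Fintype.card G := by
    rw [hα, card_filter]
    push_cast
    rfl
  have hδ' : δ = (∑ g, deranged g) / Fintype.card G := by
    have hV : (Fintype.card V : ℝ) ≠ 0 := Nat.cast_ne_zero.2 Fintype.card_ne_zero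
    rw [hδ, card_filter, Fintype.sum_prod_type]
    simp only [← card_filter]
    push_cast
    simp only [Module.End.card_filter_forall_apply_add_ne, ← mul_sum, Nat.card_eq_fintype_card]
    field_simp
    rfl
  rw [hα', hδ', ← Nat.card_eq_fintype_card (α := F), ← mul_div_assoc, mul_sum]
  constructor
  · gcongr with g
    exact Module.End.le_one_sub_inv_card_ker_one_sub (ρ g)
  · gcongr with g
    exact Module.End.one_sub_inv_card_ker_one_sub_le (ρ g)
end

section
/- Let G be a finite group acting linearly on a finite F_q-vector space V, let D(V ⋊ G) be the subgroup of the affine group V ⋊ G generated by all derangements (on V), and let A(G) be the subgroup of G generated by all elements of G having eigenvalue 1 on V. Then the index |V ⋊ G : D(V ⋊ G)| equals |G : A(G)|. -/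
open Finset

/-- The homomorphism `G →* MulAut (Multiplicative V)` induced by a linear action of `G`
on `V` by linear automorphisms. -/
def reprToMulAut {F G V : Type*} [Field F] [Group G] [AddCommGroup V] [Module F V]
    (ρ : G →* (V ≃ₗ[F] V)) : G →* MulAut (Multiplicative V) where
  toFun g := AddEquiv.toMultiplicative (ρ g).toAddEquiv
  map_one' := by ext v; simp [AddEquiv.toMultiplicative]
  map_mul' g h := by ext v; simp [AddEquiv.toMultiplicative]

/-! The derangements of `V ⋊ G` contain every nontrivial translation, so they generate a
subgroup containing the kernel `V` of `V ⋊ G → G`; its index is therefore the index of the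
subgroup of `G` generated by the linear parts of derangements. The affine map
`v ↦ g v + w` has no fixed point iff `w` is not in the image of `1 - g`, and on a finite
space such a `w` exists iff `1 - g` is not injective, i.e. iff `g` has eigenvalue 1. -/

theorem AddMonoidHom.exists_forall_add_ne_iff {V : Type*} [AddCommGroup V] [Finite V]
    (f : V →+ V) : (∃ w, ∀ v, f v + w ≠ v) ↔ ∃ v, v ≠ 0 ∧ f v = v := by
  set d := AddMonoidHom.id V - f
  have add_eq_iff : ∀ v w, f v + w = v ↔ d v = w := fun v w => by
    simp only [d, AddMonoidHom.sub_apply, AddMonoidHom.id_apply]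
    exact eq_sub_iff_add_eq'.symm.trans eq_comm
  have not_surjective : (∃ w, ∀ v, f v + w ≠ v) ↔ ¬ Function.Surjective d := by
    simp only [Function.Surjective, not_forall, not_exists, ne_eq, add_eq_iff]
  have not_injective : (∃ v, v ≠ 0 ∧ f v = v) ↔ ¬ Function.Injective d := by
    simp only [injective_iff_map_eq_zero, not_forall, ← add_eq_iff, add_zero]
    exact exists_congr fun v => by tauto
  rw [not_surjective, not_injective, Finite.injective_iff_surjective]

theorem Subgroup.index_closure_eq_index_closure_image {W G : Type*} [Group W] [Group G]
    {f : W →* G} (hf : Function.Surjective f) {S : Set W} (hker : f.ker ≤ Subgroup.closure S) :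
    (Subgroup.closure S).index = (Subgroup.closure (f '' S)).index := by
  rw [← MonoidHom.map_closure, Subgroup.index_map_eq _ hf hker]

section Affine

variable {F G V : Type*} [Field F] [Group G] [AddCommGroup V] [Module F V]
  (ρ : G →* (V ≃ₗ[F] V))

theorem ker_rightHom_le_closure_derangements :
    (SemidirectProduct.rightHom : SemidirectProduct (Multiplicative V) G (reprToMulAut ρ) →* G).ker
      ≤ Subgroup.closure {x | ∀ v : V, ρ x.right v + x.left.toAdd ≠ v} := by
  intro x hx
  rw [MonoidHom.mem_ker, SemidirectProduct.rightHom_eq_right] at hx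
  by_cases hleft : x.left = 1
  · have : x = 1 := SemidirectProduct.ext hleft hx
    exact this ▸ Subgroup.one_mem _
  · refine Subgroup.subset_closure fun v h => hleft ?_
    rw [hx, map_one, LinearEquiv.coe_one, id_eq, add_eq_left] at h
    exact toAdd_eq_zero.mp h

theorem rightHom_image_derangements [Finite V] :
    (SemidirectProduct.rightHom : SemidirectProduct (Multiplicative V) G (reprToMulAut ρ) →* G) ''
        {x | ∀ v : V, ρ x.right v + x.left.toAdd ≠ v} =
      {g | ∃ v : V, v ≠ 0 ∧ ρ g v = v} := by
  ext g
  refine Iff.trans ?_ (ρ g : V →+ V).exists_forall_add_ne_iff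
  constructor
  · rintro ⟨x, hx, rfl⟩
    exact ⟨x.left.toAdd, hx⟩
  · rintro ⟨w, hw⟩
    exact ⟨⟨Multiplicative.ofAdd w, g⟩, hw, rfl⟩

end Affine

theorem stmt_3_general (F : Type*) [Field F] (G : Type*) [Group G]
    (V : Type*) [AddCommGroup V] [Module F V] [Fintype V]
    (ρ : G →* (V ≃ₗ[F] V)) :
    (Subgroup.closure {x : SemidirectProduct (Multiplicative V) G (reprToMulAut ρ) |
        ∀ v : V, ρ x.right v + x.left.toAdd ≠ v}).index =
      (Subgroup.closure {g : G | ∃ v : V, v ≠ 0 ∧ ρ g v = v}).index := by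
  rw [Subgroup.index_closure_eq_index_closure_image SemidirectProduct.rightHom_surjective
    (ker_rightHom_le_closure_derangements ρ), rightHom_image_derangements]

/-- `|V ⋊ G : D(V ⋊ G)| = |G : A(G)|`, where `D(V ⋊ G)` is the subgroup
of the affine group `V ⋊ G` generated by all derangements on `V`, and `A(G)` is the
subgroup of `G` generated by all elements with eigenvalue 1 on `V`. -/
theorem stmt_3 (F : Type*) [Field F] [Fintype F] (G : Type*) [Group G] [Fintype G]
    (V : Type*) [AddCommGroup V] [Module F V] [Fintype V]
    (ρ : G →* (V ≃ₗ[F] V)) :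
    (Subgroup.closure {x : SemidirectProduct (Multiplicative V) G (reprToMulAut ρ) |
        ∀ v : V, ρ x.right v + x.left.toAdd ≠ v}).index =
      (Subgroup.closure {g : G | ∃ v : V, v ≠ 0 ∧ ρ g v = v}).index :=
  stmt_3_general F G V ρ
end

section
/- For any element g ∈ GL_2(F_q) and any λ ∈ F_q^×, the proportion of elements of the coset SL_2(F_q)·g having eigenvalue λ is at least 1/q. -/
/-!
Writing `d = det g`, the map `s ↦ s g` identifies `SL₂(F_q)` with the matrices of determinant `d`,
so it suffices to find `q²` such matrices having `λ` as an eigenvalue, against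
`|SL₂(F_q)| = q (q² - 1) ≤ q³`. A matrix of determinant `d` has eigenvalue `λ` exactly when its
trace is `t = λ + d / λ`; these matrices are parametrised injectively by their bottom-left entry
`z` together with their top-left entry when `z ≠ 0`, or their top-right entry when `z = 0`.
-/

open Finset Matrix

namespace Matrix.SpecialLinearGroup

variable {n R : Type*} [Fintype n] [DecidableEq n] [CommRing R]

def mulRightEquivDetEq (g : GL n R) :
    SpecialLinearGroup n R ≃ {M : Matrix n n R // M.det = (g : Matrix n n R).det} where
  toFun s := ⟨s * g, by rw [det_mul, s.2, one_mul]⟩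
  invFun M := ⟨M * (g⁻¹ : GL n R), by
    rw [det_mul, M.2, ← det_mul, ← Units.val_mul, mul_inv_cancel, Units.val_one, det_one]⟩
  left_inv s := by ext1; simp [mul_assoc]
  right_inv M := by ext1; simp [mul_assoc]

theorem card_mul_card_units [Nonempty n] :
    Nat.card (SpecialLinearGroup n R) * Nat.card Rˣ = Nat.card (GL n R) := by
  have hker : Nat.card (GeneralLinearGroup.det : GL n R →* Rˣ).ker =
      Nat.card (SpecialLinearGroup n R) := by
    rw [← Nat.card_range_of_injective toGL_injective, range_toGL, ← MonoidHom.coe_ker]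
    rfl
  rw [← Subgroup.card_mul_index (GeneralLinearGroup.det : GL n R →* Rˣ).ker,
    Subgroup.index_ker, MonoidHom.range_eq_top.mpr GeneralLinearGroup.det_surjective,
    Subgroup.card_top, hker]

theorem card_fin_two (F : Type*) [Field F] [Fintype F] :
    Nat.card (SpecialLinearGroup (Fin 2) F) = Fintype.card F * (Fintype.card F ^ 2 - 1) := by
  set q := Fintype.card F
  have hGL := card_GL_field (𝔽 := F) 2
  rw [← card_mul_card_units, Nat.card_units, Nat.card_eq_fintype_card (α := F),
    Fin.prod_univ_two] at hGL
  simp only [Fin.val_zero, Fin.val_one, pow_zero, pow_one] at hGL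
  apply Nat.eq_of_mul_eq_mul_right (Nat.sub_pos_of_lt Fintype.one_lt_card : 0 < q - 1)
  rw [hGL, show q ^ 2 - q = q * (q - 1) by rw [sq, Nat.mul_sub_one]]
  ring

end Matrix.SpecialLinearGroup

section EigenMatrix

variable {F : Type*} [Field F] [DecidableEq F] {lam d : F}

def eigenMatrix (lam d : F) (p : F × F) : Matrix (Fin 2) (Fin 2) F :=
  if p.2 = 0 then !![lam, p.1; 0, d / lam]
  else !![p.1, (p.1 * (lam + d / lam - p.1) - d) / p.2; p.2, lam + d / lam - p.1]

theorem det_eigenMatrix (hlam : lam ≠ 0) (p : F × F) : (eigenMatrix lam d p).det = d := by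
  unfold eigenMatrix
  split_ifs with hz
  · simp [det_fin_two_of, mul_div_cancel₀ _ hlam]
  · rw [det_fin_two_of]; field_simp; ring

theorem det_eigenMatrix_sub_smul (hlam : lam ≠ 0) (p : F × F) :
    (eigenMatrix lam d p - lam • 1).det = 0 := by
  unfold eigenMatrix
  split_ifs with hz
  · simp [det_fin_two]
  · simp [det_fin_two]; field_simp; ring

theorem eigenMatrix_apply_one_zero (p : F × F) : eigenMatrix lam d p 1 0 = p.2 := by
  unfold eigenMatrix
  split_ifs with hz <;> simp [hz]

theorem eigenMatrix_injective : Function.Injective (eigenMatrix lam d) := by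
  rintro ⟨x, z⟩ ⟨x', z'⟩ h
  have hz : z = z' := by simpa [eigenMatrix_apply_one_zero] using congrFun (congrFun h 1) 0
  subst hz
  by_cases hz : z = 0
  · simpa [eigenMatrix, hz] using congrFun (congrFun h 0) 1
  · simpa [eigenMatrix, hz] using congrFun (congrFun h 0) 0

end EigenMatrix

/-- for `g ∈ GL_2(F_q)` and `λ ∈ F_q^×`, the proportion of elements of
the coset `SL_2(F_q)·g` having eigenvalue `λ` is at least `1/q`. -/
theorem stmt_10 (F : Type*) [Field F] [Fintype F] [DecidableEq F]
    (g : GL (Fin 2) F) (lam : F) (hlam : lam ≠ 0) :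
    ((univ.filter (fun s : Matrix.SpecialLinearGroup (Fin 2) F =>
        Matrix.det ((s : Matrix (Fin 2) (Fin 2) F) * (g : Matrix (Fin 2) (Fin 2) F)
          - lam • (1 : Matrix (Fin 2) (Fin 2) F)) = 0)).card : ℝ) /
      (Fintype.card (Matrix.SpecialLinearGroup (Fin 2) F)) ≥
      1 / (Fintype.card F : ℝ) := by
  set q := Fintype.card F
  set d := (g : Matrix (Fin 2) (Fin 2) F).det
  have hcount : q ^ 2 ≤ (univ.filter (fun s : SpecialLinearGroup (Fin 2) F =>
      ((s : Matrix (Fin 2) (Fin 2) F) * g - lam • 1).det = 0)).card := by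
    rw [← Fintype.card_subtype]
    calc q ^ 2 = Fintype.card (F × F) := by rw [Fintype.card_prod, sq]
      _ ≤ Fintype.card {M : {M : Matrix (Fin 2) (Fin 2) F // M.det = d} //
            (M.1 - lam • 1).det = 0} :=
        Fintype.card_le_of_injective
          (fun p ↦ ⟨⟨eigenMatrix lam d p, det_eigenMatrix hlam p⟩,
            det_eigenMatrix_sub_smul hlam p⟩)
          fun _ _ h ↦ eigenMatrix_injective (congrArg (fun M ↦ M.1.1) h)
      _ = _ := Fintype.card_congr
          ((SpecialLinearGroup.mulRightEquivDetEq g).subtypeEquiv fun _ ↦ Iff.rfl).symm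
  have hSL : Fintype.card (SpecialLinearGroup (Fin 2) F) ≤ q ^ 2 * q := by
    rw [← Nat.card_eq_fintype_card, SpecialLinearGroup.card_fin_two, mul_comm]
    exact Nat.mul_le_mul_right _ (Nat.sub_le _ _)
  have hq : (0 : ℝ) < q := by exact_mod_cast Fintype.card_pos
  rw [ge_iff_le, div_le_div_iff₀ hq (by exact_mod_cast Fintype.card_pos), one_mul]
  exact_mod_cast hSL.trans (Nat.mul_le_mul_right q hcount)
end

section
/- Let q be a prime power and λ ∈ F_q^× with λ² ≠ det(g) for some g ∈ GL_2(F_q). Then the proportion of elements of the coset SL_2(F_q)·g having eigenvalue λ is exactly 1/(q-1). -/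
/-!
Right multiplication by `g` maps `SL₂(F)` bijectively onto the matrices of determinant
`d = det g`, and such a matrix has eigenvalue `λ` iff its trace is `λ + μ` with `μ = d / λ`,
where `μ ≠ λ` because `λ² ≠ d`. Count `2 × 2` matrices by their diagonal `(a, e)`: the
off-diagonal entries solve `b c = a e - d`, which has `q - 1` solutions, plus `q` more when
`a e = d`. Of the `q` diagonals with `a + e = λ + μ` exactly two have `a e = λ μ`, giving
`q (q + 1)` matrices; over all `q²` diagonals one gets `|SL₂(F)| = (q - 1) q (q + 1)`.
-/

open Finset Matrix

lemma card_filter_prod {X Y : Type*} [Fintype X] [Fintype Y] (P : X × Y → Prop)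
    [DecidablePred P] : #{p | P p} = ∑ x, #{y | P (x, y)} := by
  simp only [card_filter, ← univ_product_univ, sum_product]

lemma card_filter_fin_two_matrix {α : Type*} [Fintype α] [DecidableEq α]
    (P : Matrix (Fin 2) (Fin 2) α → Prop) [DecidablePred P] :
    #{m | P m} = #{p : (α × α) × (α × α) | P !![p.1.1, p.2.1; p.2.2, p.1.2]} :=
  card_equiv
    { toFun := fun m => ((m 0 0, m 1 1), (m 0 1, m 1 0))
      invFun := fun p => !![p.1.1, p.2.1; p.2.2, p.1.2]
      left_inv := fun m => (eta_fin_two m).symm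
      right_inv := fun _ => rfl }
    fun m => by simp only [mem_filter_univ]; exact iff_of_eq (congrArg P (eta_fin_two m))

lemma card_prod_add_eq {R : Type*} [AddGroup R] [Fintype R] [DecidableEq R] (t : R) :
    #{x : R × R | x.1 + x.2 = t} = Fintype.card R := by
  rw [card_filter_prod]
  simp [← eq_neg_add_iff_add_eq, filter_eq']

lemma card_prod_add_eq_and_mul_eq {R : Type*} [CommRing R] [IsDomain R] [Fintype R]
    [DecidableEq R] {a b : R} (hab : a ≠ b) :
    #{x : R × R | x.1 + x.2 = a + b ∧ x.1 * x.2 = a * b} = 2 := by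
  suffices h : ({x : R × R | x.1 + x.2 = a + b ∧ x.1 * x.2 = a * b} : Finset (R × R))
      = {(a, b), (b, a)} by
    rw [h, card_pair (by simp [hab])]
  ext ⟨x, y⟩
  simp only [mem_filter_univ, mem_insert, mem_singleton, Prod.mk.injEq]
  constructor
  · rintro ⟨hsum, hprod⟩
    obtain rfl : y = a + b - x := by linear_combination hsum
    have hroots : (x - a) * (x - b) = 0 := by linear_combination -hprod
    rcases mul_eq_zero.1 hroots with h | h
    · exact .inl ⟨by linear_combination h, by linear_combination -h⟩
    · exact .inr ⟨by linear_combination h, by linear_combination -h⟩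
  · rintro (⟨rfl, rfl⟩ | ⟨rfl, rfl⟩)
    · exact ⟨rfl, rfl⟩
    · exact ⟨add_comm _ _, mul_comm _ _⟩

lemma det_sub_smul_one_eq_zero_iff {F : Type*} [Field F] (m : Matrix (Fin 2) (Fin 2) F) {c : F}
    (hc : c ≠ 0) : (m - c • 1).det = 0 ↔ m.trace = c + m.det / c := by
  have h : (m - c • 1).det = c * (c + m.det / c - m.trace) := by
    simp only [det_fin_two, trace_fin_two, Matrix.sub_apply, Matrix.smul_apply, one_apply_eq,
      one_apply_ne, ne_eq, zero_ne_one, one_ne_zero, not_false_eq_true, smul_eq_mul, mul_one,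
      mul_zero, sub_zero]
    field_simp
    ring
  rw [h, mul_eq_zero, sub_eq_zero]
  simp [hc, eq_comm]

lemma card_filter_specialLinearGroup_mul {n R : Type*} [Fintype n] [DecidableEq n] [CommRing R]
    [Fintype R] [DecidableEq R] (g : GL n R) (P : Matrix n n R → Prop) [DecidablePred P] :
    #{s : SpecialLinearGroup n R | P ((s : Matrix n n R) * (g : Matrix n n R))}
      = #{m | m.det = (g : Matrix n n R).det ∧ P m} := by
  refine card_bij' (fun s _ => s * g)
    (fun m hm => ⟨m * ((g⁻¹ : GL n R) : Matrix n n R), ?_⟩) ?_ ?_ ?_ ?_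
  · rw [det_mul, ((mem_filter_univ _).1 hm).1, ← det_mul, Units.mul_inv, det_one]
  · intro s hs
    rw [mem_filter_univ] at hs ⊢
    exact ⟨by rw [det_mul, s.2, one_mul], hs⟩
  · intro m hm
    refine (mem_filter_univ _).2 ?_
    simpa only [SpecialLinearGroup.coe_mk, mul_assoc, Units.inv_mul, mul_one]
      using ((mem_filter_univ _).1 hm).2
  · intro s _
    ext1
    simp only [mul_assoc, Units.mul_inv, mul_one]
  · intro m _
    simp only [mul_assoc, Units.inv_mul, mul_one]

section FiniteField

variable {F : Type*} [Field F] [Fintype F] [DecidableEq F]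

lemma card_prod_mul_eq (k : F) :
    #{p : F × F | p.1 * p.2 = k}
      = Fintype.card F - 1 + if k = 0 then Fintype.card F else 0 := by
  rw [card_filter_prod, ← add_sum_erase _ _ (mem_univ 0), add_comm]
  have h_zero : #{b : F | 0 * b = k} = if k = 0 then Fintype.card F else 0 := by
    split_ifs with hk <;> simp [hk, eq_comm]
  have h_unit : ∀ a ∈ univ.erase (0 : F), #{b | a * b = k} = 1 := fun a ha => by
    rw [card_eq_one]
    exact ⟨a⁻¹ * k, by ext b; simp [eq_inv_mul_iff_mul_eq₀ (ne_of_mem_erase ha)]⟩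
  rw [h_zero, sum_congr rfl h_unit]
  simp

lemma card_filter_diag_and_det_eq (D : F × F → Prop) [DecidablePred D] (d : F) :
    #{m : Matrix (Fin 2) (Fin 2) F | D (m 0 0, m 1 1) ∧ m.det = d}
      = #{x | D x} * (Fintype.card F - 1)
        + #{x : F × F | D x ∧ x.1 * x.2 = d} * Fintype.card F := by
  rw [card_filter_fin_two_matrix, card_filter_prod]
  have h_fiber (x : F × F) : #{y : F × F | D x ∧ x.1 * x.2 - y.1 * y.2 = d}
      = if D x then Fintype.card F - 1 + (if x.1 * x.2 = d then Fintype.card F else 0)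
        else 0 := by
    by_cases hx : D x
    · have h := card_prod_mul_eq (x.1 * x.2 - d)
      simp only [sub_eq_zero] at h
      rw [if_pos hx, ← h]
      congr 1
      ext y
      simp only [mem_filter_univ, hx, true_and]
      constructor <;> intro h <;> linear_combination -h
    · simp [hx]
  simp only [of_apply, cons_val', cons_val_zero, cons_val_fin_one, cons_val_one, Prod.mk.eta,
    det_fin_two_of, h_fiber]
  rw [← sum_filter, sum_add_distrib, sum_const, ← sum_filter, sum_const, filter_filter,
    smul_eq_mul, smul_eq_mul]

lemma card_det_eq {d : F} (hd : d ≠ 0) :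
    #{m : Matrix (Fin 2) (Fin 2) F | m.det = d}
      = (Fintype.card F - 1) * (Fintype.card F * (Fintype.card F + 1)) := by
  have h := card_filter_diag_and_det_eq (fun _ => True) d
  simp only [true_and, filter_true, card_univ, Fintype.card_prod, card_prod_mul_eq, hd,
    if_false, add_zero] at h
  rw [h]
  ring

lemma card_specialLinearGroup_fin_two :
    Fintype.card (SpecialLinearGroup (Fin 2) F)
      = (Fintype.card F - 1) * (Fintype.card F * (Fintype.card F + 1)) := by
  rw [← card_det_eq one_ne_zero]
  exact Fintype.card_subtype _

lemma card_trace_det_eq {a b : F} (hab : a ≠ b) :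
    #{m : Matrix (Fin 2) (Fin 2) F | m.trace = a + b ∧ m.det = a * b}
      = Fintype.card F * (Fintype.card F + 1) := by
  have h := card_filter_diag_and_det_eq (fun x => x.1 + x.2 = a + b) (a * b)
  simp only [card_prod_add_eq, card_prod_add_eq_and_mul_eq hab] at h
  simp only [trace_fin_two, h]
  have hq : 1 ≤ Fintype.card F := Fintype.card_pos
  zify [hq]
  ring

end FiniteField

/-- for `g ∈ GL_2(F_q)` and `λ ∈ F_q^×` with `λ² ≠ det g`, the proportion
of elements of the coset `SL_2(F_q)·g` having eigenvalue `λ` is exactly `1/(q-1)`. -/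
theorem stmt_11 (F : Type*) [Field F] [Fintype F] [DecidableEq F]
    (g : GL (Fin 2) F) (lam : F) (hlam : lam ≠ 0)
    (hdet : lam ^ 2 ≠ Matrix.det (g : Matrix (Fin 2) (Fin 2) F)) :
    ((univ.filter (fun s : Matrix.SpecialLinearGroup (Fin 2) F =>
        Matrix.det ((s : Matrix (Fin 2) (Fin 2) F) * (g : Matrix (Fin 2) (Fin 2) F)
          - lam • (1 : Matrix (Fin 2) (Fin 2) F)) = 0)).card : ℝ) /
      (Fintype.card (Matrix.SpecialLinearGroup (Fin 2) F)) =
      1 / ((Fintype.card F : ℝ) - 1) := by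
  set d := (g : Matrix (Fin 2) (Fin 2) F).det
  have hd : lam * (d / lam) = d := mul_div_cancel₀ d hlam
  have hne : lam ≠ d / lam := fun h => hdet (by rw [sq]; nth_rw 2 [h]; exact hd)
  have h_count : #{s : SpecialLinearGroup (Fin 2) F | ((s : Matrix (Fin 2) (Fin 2) F) *
      (g : Matrix (Fin 2) (Fin 2) F) - lam • 1).det = 0}
      = Fintype.card F * (Fintype.card F + 1) := by
    rw [card_filter_specialLinearGroup_mul g (fun m => (m - lam • 1).det = 0),
      ← card_trace_det_eq hne, hd]
    congr 1
    ext m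
    simp only [mem_filter_univ, det_sub_smul_one_eq_zero_iff m hlam]
    rw [and_comm]
    exact and_congr_left fun hm => by rw [hm]
  have hq : 2 ≤ Fintype.card F := Fintype.one_lt_card
  rw [h_count, card_specialLinearGroup_fin_two]
  push_cast [Nat.cast_sub (by omega : 1 ≤ Fintype.card F)]
  field_simp
end

section
/- Let G = A_m be the alternating group with m ≥ 5. The proportion of elements of A_m having at most two cycles (in their decomposition into disjoint cycles on m points, including fixed points as cycles) is at most 2(1 + log m)/m. -/
/-!
The sign of a permutation of `m` points with `k` cycles (fixed points included) is
`(-1) ^ (m + k)`, so an even permutation with at most two cycles is an `m`-cycle when `m` is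
odd, and has cycle lengths `i, m - i` with `1 ≤ i ≤ m / 2` when `m` is even. At most
`m! / ∏ parts` permutations share a cycle type, which bounds the proportion by `2 / m` for odd
`m` and by `2 ∑_{i ≤ m/2} 1 / (i (m - i)) = 2 (H_m + 1 / m) / m` for even `m`; finally
`H_m ≤ 2 / 3 + log m` for `m ≥ 6` since `H_n - log n` decreases.
-/

open Finset Equiv
open scoped Nat

namespace Nat.Partition

variable {n : ℕ}

theorem card_parts_pos (p : n.Partition) (hn : n ≠ 0) : 0 < p.parts.card := by
  refine Multiset.card_pos.mpr fun h => hn ?_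
  rw [← p.parts_sum, h, Multiset.sum_zero]

theorem parts_eq_singleton_of_card_parts_eq_one (p : n.Partition) (h : p.parts.card = 1) :
    p.parts = {n} := by
  obtain ⟨a, ha⟩ := Multiset.card_eq_one.mp h
  have hsum := p.parts_sum
  rw [ha, Multiset.sum_singleton] at hsum
  rw [ha, hsum]

theorem exists_parts_eq_pair_of_card_parts_eq_two (p : n.Partition) (h : p.parts.card = 2) :
    ∃ i ∈ Icc 1 (n / 2), p.parts = {i, n - i} := by
  obtain ⟨a, b, hab⟩ := Multiset.card_eq_two.mp h
  have hsum : a + b = n := by simpa [hab] using p.parts_sum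
  have ha : 0 < a := p.parts_pos (by simp [hab])
  have hb : 0 < b := p.parts_pos (by simp [hab])
  rcases le_total a b with hle | hle
  · exact ⟨a, mem_Icc.mpr ⟨ha, by omega⟩, by rw [hab, ← hsum, Nat.add_sub_cancel_left]⟩
  · exact ⟨b, mem_Icc.mpr ⟨hb, by omega⟩, by
      rw [hab, ← hsum, Nat.add_sub_cancel, Multiset.pair_comm]⟩

end Nat.Partition

theorem harmonic_le_two_thirds_add_log {n : ℕ} (hn : 6 ≤ n) :
    (harmonic n : ℝ) ≤ 2 / 3 + Real.log n := by
  have h := (Real.strictAnti_eulerMascheroniSeq'.antitone hn).trans_lt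
    Real.eulerMascheroniSeq'_six_lt_two_thirds
  rw [Real.eulerMascheroniSeq', if_neg (by omega)] at h
  linarith

theorem sum_Icc_one_div_two_mul_sub_eq (h : ℕ) :
    ∑ i ∈ Icc 1 h, 1 / (2 * h - i : ℝ) = ∑ j ∈ Ico h (2 * h), 1 / (j : ℝ) := by
  refine sum_nbij' (2 * h - ·) (2 * h - ·) ?_ ?_ ?_ ?_ fun i hi => ?_
  all_goals try (intro i hi; simp only [mem_Icc, mem_Ico] at hi ⊢; omega)
  rw [Nat.cast_sub (by simp only [mem_Icc] at hi; omega), Nat.cast_mul, Nat.cast_two]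

theorem sum_Icc_one_div_mul_two_mul_sub_eq {h : ℕ} (hh : 1 ≤ h) :
    ∑ i ∈ Icc 1 h, 1 / ((i : ℝ) * (2 * h - i)) =
      (harmonic (2 * h) + 1 / (2 * h)) / (2 * h) := by
  have hh' : (h : ℝ) ≠ 0 := by exact_mod_cast (by omega : h ≠ 0)
  have hsplit : ∀ i ∈ Icc 1 h,
      1 / ((i : ℝ) * (2 * h - i)) = (1 / i + 1 / (2 * h - i)) / (2 * h) := by
    intro i hi
    have hi := mem_Icc.mp hi
    have : (i : ℝ) + 1 ≤ 2 * h := by exact_mod_cast (by omega : i + 1 ≤ 2 * h)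
    have : (2 * h - i : ℝ) ≠ 0 := by linarith
    have : (i : ℝ) ≠ 0 := by exact_mod_cast (by omega : i ≠ 0)
    field_simp
    ring
  have hharmonic :
      (harmonic (2 * h) : ℝ) = ∑ j ∈ Ico 1 (2 * h), 1 / (j : ℝ) + 1 / (2 * h) := by
    rw [harmonic_eq_sum_Icc, ← Ico_add_one_right_eq_Icc, sum_Ico_succ_top (by omega)]
    push_cast
    simp only [one_div]
  rw [sum_congr rfl hsplit, ← sum_div, sum_add_distrib, sum_Icc_one_div_two_mul_sub_eq,
    ← Ico_add_one_right_eq_Icc, sum_eq_sum_Ico_succ_bot (by omega : h < 2 * h), add_left_comm,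
    sum_Ico_consecutive _ (by omega) (by omega), hharmonic]
  field_simp
  ring

theorem sum_Icc_one_div_mul_two_mul_sub_le {h : ℕ} (hh : 3 ≤ h) :
    ∑ i ∈ Icc 1 h, 1 / ((i : ℝ) * (2 * h - i)) ≤ (1 + Real.log (2 * h)) / (2 * h) := by
  rw [sum_Icc_one_div_mul_two_mul_sub_eq (by omega)]
  have hH := harmonic_le_two_thirds_add_log (n := 2 * h) (by omega)
  have h6 : (6 : ℝ) ≤ 2 * h := by exact_mod_cast (by omega : 6 ≤ 2 * h)
  have h6' : 1 / (2 * h : ℝ) ≤ 1 / 6 := one_div_le_one_div_of_le (by norm_num) h6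
  push_cast at hH
  exact div_le_div_of_nonneg_right (by linarith) (by linarith)

namespace Equiv.Perm

variable {α : Type*} [Fintype α] [DecidableEq α]

theorem card_parts_partition (σ : Perm α) :
    σ.partition.parts.card = σ.cycleType.card + (Fintype.card α - #σ.support) := by
  simp [parts_partition]

theorem prod_parts_partition (σ : Perm α) : σ.partition.parts.prod = σ.cycleType.prod := by
  simp [parts_partition]

theorem sign_eq_neg_one_pow_card_add_card_parts (σ : Perm α) :
    sign σ = (-1) ^ (Fintype.card α + σ.partition.parts.card) := by
  have hexp : Fintype.card α + σ.partition.parts.card =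
      σ.cycleType.sum + σ.cycleType.card + 2 * (Fintype.card α - #σ.support) := by
    have := σ.support.card_le_univ
    rw [card_parts_partition, sum_cycleType]
    omega
  rw [hexp, pow_add, pow_mul, neg_one_sq, one_pow, mul_one, sign_of_cycleType]

theorem even_card_add_card_parts_of_sign_eq_one {σ : Perm α} (hσ : sign σ = 1) :
    Even (Fintype.card α + σ.partition.parts.card) := by
  rwa [sign_eq_neg_one_pow_card_add_card_parts, neg_one_pow_eq_one_iff_even (by decide)] at hσ

/-- Fixed points count as cycles of length one. -/
def evenPermsWithAtMostTwoCycles (α : Type*) [Fintype α] [DecidableEq α] : Finset (Perm α) :=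
  {σ : Perm α | sign σ = 1 ∧ σ.partition.parts.card ≤ 2}

theorem card_filter_parts_partition_eq_mul_prod_le (t : Multiset ℕ) :
    #{σ : Perm α | σ.partition.parts = t} * t.prod ≤ (Fintype.card α)! := by
  rcases eq_empty_or_nonempty {σ : Perm α | σ.partition.parts = t} with h0 | ⟨σ₀, hσ₀⟩
  · simp [h0]
  replace hσ₀ : σ₀.partition.parts = t := (mem_filter.mp hσ₀).2
  have hsub : ({σ : Perm α | σ.partition.parts = t} : Finset (Perm α)) ⊆
      ({σ : Perm α | σ.cycleType = σ₀.cycleType} : Finset (Perm α)) :=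
    monotone_filter_right _ fun σ _ (hσ : σ.partition.parts = t) => by
      rw [← filter_parts_partition_eq_cycleType, ← filter_parts_partition_eq_cycleType, hσ,
        hσ₀]
  have hcount := card_of_cycleType_mul_eq α σ₀.cycleType
  rw [if_pos ⟨sum_cycleType σ₀ ▸ σ₀.support.card_le_univ,
    fun _ => two_le_of_mem_cycleType⟩] at hcount
  have hprod : t.prod = σ₀.cycleType.prod := hσ₀ ▸ σ₀.prod_parts_partition
  rw [← hcount, hprod]
  refine Nat.mul_le_mul (card_le_card hsub) ?_
  exact (Nat.le_mul_of_pos_left _ (Nat.factorial_pos _)).trans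
    (Nat.le_mul_of_pos_right _ (prod_pos fun _ _ => Nat.factorial_pos _))

theorem card_evenPermsWithAtMostTwoCycles_mul_le_of_odd (hodd : Odd (Fintype.card α)) :
    #(evenPermsWithAtMostTwoCycles α) * Fintype.card α ≤ (Fintype.card α)! := by
  have hsub : evenPermsWithAtMostTwoCycles α ⊆
      ({σ : Perm α | σ.partition.parts = {Fintype.card α}} : Finset (Perm α)) :=
    monotone_filter_right _ fun σ _ (hσ : sign σ = 1 ∧ σ.partition.parts.card ≤ 2) => by
      refine σ.partition.parts_eq_singleton_of_card_parts_eq_one ?_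
      obtain ⟨a, ha⟩ := hodd
      obtain ⟨b, hb⟩ := even_card_add_card_parts_of_sign_eq_one hσ.1
      omega
  calc _ ≤ #{σ : Perm α | σ.partition.parts = {Fintype.card α}} *
        ({Fintype.card α} : Multiset ℕ).prod := by
        rw [Multiset.prod_singleton]
        exact Nat.mul_le_mul_right _ (card_le_card hsub)
    _ ≤ _ := card_filter_parts_partition_eq_mul_prod_le _

theorem card_evenPermsWithAtMostTwoCycles_le_of_eq_two_mul {h : ℕ}
    (hn : Fintype.card α = 2 * h) (hh : 1 ≤ h) :
    (#(evenPermsWithAtMostTwoCycles α) : ℝ) ≤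
      (Fintype.card α)! * ∑ i ∈ Icc 1 h, 1 / ((i : ℝ) * (2 * h - i)) := by
  have hsub : evenPermsWithAtMostTwoCycles α ⊆
      (Icc 1 h).biUnion fun i => {σ : Perm α | σ.partition.parts = {i, 2 * h - i}} := by
    intro σ hσ
    obtain ⟨hsign, hcard⟩ := (mem_filter.mp hσ).2
    have hpos := σ.partition.card_parts_pos (by omega)
    obtain ⟨b, hb⟩ := even_card_add_card_parts_of_sign_eq_one hsign
    obtain ⟨i, hi, hparts⟩ := σ.partition.exists_parts_eq_pair_of_card_parts_eq_two (by omega)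
    rw [hn, show 2 * h / 2 = h by omega] at hi
    exact mem_biUnion.mpr ⟨i, hi, mem_filter.mpr ⟨mem_univ σ, by rw [hparts, hn]⟩⟩
  have hterm : ∀ i ∈ Icc 1 h, (#{σ : Perm α | σ.partition.parts = {i, 2 * h - i}} : ℝ) ≤
      (Fintype.card α)! * (1 / ((i : ℝ) * (2 * h - i))) := by
    intro i hi
    have hi := mem_Icc.mp hi
    have hcount := card_filter_parts_partition_eq_mul_prod_le (α := α) {i, 2 * h - i}
    rw [Multiset.prod_pair] at hcount
    have hprod : ((i * (2 * h - i) : ℕ) : ℝ) = (i : ℝ) * (2 * h - i) := by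
      push_cast [show i ≤ 2 * h by omega]; ring
    have hpos : (0 : ℝ) < (i : ℝ) * (2 * h - i) := by
      rw [← hprod]; exact_mod_cast Nat.mul_pos (by omega) (by omega)
    rw [mul_one_div, le_div_iff₀ hpos, ← hprod]
    exact_mod_cast hcount
  calc (#(evenPermsWithAtMostTwoCycles α) : ℝ)
      ≤ ∑ i ∈ Icc 1 h, (#{σ : Perm α | σ.partition.parts = {i, 2 * h - i}} : ℝ) := by
        exact_mod_cast (card_le_card hsub).trans card_biUnion_le
    _ ≤ ∑ i ∈ Icc 1 h, (Fintype.card α)! * (1 / ((i : ℝ) * (2 * h - i))) :=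
        sum_le_sum hterm
    _ = _ := (mul_sum ..).symm

theorem card_evenPermsWithAtMostTwoCycles_le (hα : 5 ≤ Fintype.card α) :
    (#(evenPermsWithAtMostTwoCycles α) : ℝ) ≤
      (Fintype.card α)! * ((1 + Real.log (Fintype.card α)) / Fintype.card α) := by
  obtain ⟨h, hn | hn⟩ := Nat.even_or_odd' (Fintype.card α)
  · calc _ ≤ (Fintype.card α)! * ∑ i ∈ Icc 1 h, 1 / ((i : ℝ) * (2 * h - i)) :=
          card_evenPermsWithAtMostTwoCycles_le_of_eq_two_mul hn (by omega)
      _ ≤ _ := by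
          rw [hn]
          push_cast
          gcongr
          exact sum_Icc_one_div_mul_two_mul_sub_le (by omega)
  · have hcount := card_evenPermsWithAtMostTwoCycles_mul_le_of_odd (α := α) ⟨h, hn⟩
    have hpos : (0 : ℝ) < Fintype.card α := by exact_mod_cast (by omega : 0 < Fintype.card α)
    have hlog : 0 ≤ Real.log (Fintype.card α) := Real.log_nonneg (Nat.one_le_cast.mpr (by omega))
    rw [mul_div_assoc', le_div_iff₀ hpos]
    calc _ ≤ ((Fintype.card α)! : ℝ) := by exact_mod_cast hcount
      _ ≤ _ := le_mul_of_one_le_right (Nat.cast_nonneg _) (by linarith)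

end Equiv.Perm

theorem card_filter_alternatingGroup {α : Type*} [Fintype α] [DecidableEq α]
    (p : Perm α → Prop) [DecidablePred p] :
    #{σ : alternatingGroup α | p σ} = #{σ : Perm α | Perm.sign σ = 1 ∧ p σ} := by
  rw [← Fintype.card_subtype, ← Fintype.card_subtype]
  exact Fintype.card_congr (subtypeSubtypeEquivSubtypeInter (· ∈ alternatingGroup α) p)

/-- the proportion of elements of the alternating group `A_m` (`m ≥ 5`)
having at most two cycles (counting fixed points as cycles of length 1) is at most
`2(1 + log m)/m`. -/
theorem stmt_12 (m : ℕ) (hm : 5 ≤ m) :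
    ((univ.filter (fun σ : alternatingGroup (Fin m) =>
        (σ : Equiv.Perm (Fin m)).cycleType.card
          + (m - (σ : Equiv.Perm (Fin m)).support.card) ≤ 2)).card : ℝ) /
      (Fintype.card (alternatingGroup (Fin m))) ≤
      2 * (1 + Real.log m) / m := by
  have : Nontrivial (Fin m) := Fin.nontrivial_iff_two_le.mpr (by omega)
  have hA : (2 * Fintype.card (alternatingGroup (Fin m)) : ℝ) = m ! := by
    exact_mod_cast two_mul_card_alternatingGroup.trans (by rw [Fintype.card_perm, Fintype.card_fin])
  have hbound := Perm.card_evenPermsWithAtMostTwoCycles_le (α := Fin m) (by simpa using hm)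
  simp only [Perm.evenPermsWithAtMostTwoCycles, Perm.card_parts_partition, Fintype.card_fin]
    at hbound
  rw [card_filter_alternatingGroup (fun σ => σ.cycleType.card + (m - #σ.support) ≤ 2),
    div_le_iff₀ (by positivity)]
  calc _ ≤ (m ! : ℝ) * ((1 + Real.log m) / m) := hbound
    _ = _ := by rw [← hA]; ring
end

section
/- Let q = p^f with f even, V = F_q viewed as an F_p-vector space, and G = GL_1(q) ⋊ ⟨σ⟩ ≤ ΓL_1(q), where σ: x ↦ x^{q^{1/2}} is the q^{1/2}-power field automorphism. Then the proportion of elements of G fixing a nonzero vector of V equals 1/(2(q^{1/2}-1)) + 1/(2(q-1)). -/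
/-!
An element `(c, σ^k)` of `Fˣ ⋊ ⟨σ⟩`, with `σ v = v ^ d` and `q = d ^ 2`, fixes some `v ≠ 0` iff
`c * v ^ (d ^ k - 1) = 1`. For `k = 0` this forces `c = 1`; for `k = 1` the admissible `c` form the
image of `v ↦ v ^ (d - 1)` on the cyclic group `Fˣ` of order `(d - 1)(d + 1)`, which has `d + 1`
elements. So `d + 2` of the `2(q - 1)` elements fix a nonzero vector.
-/

open Finset

theorem one_lt_of_card_eq_sq {α : Type*} [Fintype α] [Nontrivial α] {d : ℕ}
    (h : Fintype.card α = d ^ 2) : 1 < d :=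
  lt_of_pow_lt_pow_left₀ 2 d.zero_le (by simpa [h] using Fintype.one_lt_card (α := α))

theorem card_filter_prod_bool {α : Type*} [Fintype α] (P : α × Bool → Prop) [DecidablePred P] :
    #{x | P x} = #{a | P (a, false)} + #{a | P (a, true)} := by
  simp only [card_filter, Fintype.sum_prod_type_right, Fintype.sum_bool]
  omega

section CommGroup

variable {G : Type*} [CommGroup G]

theorem mul_pow_succ_eq_self_iff (c v : G) (m : ℕ) : c * v ^ (m + 1) = v ↔ c = v⁻¹ ^ m := by
  rw [pow_succ, ← mul_assoc, mul_eq_right, inv_pow, eq_inv_iff_mul_eq_one]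

theorem exists_mul_pow_succ_eq_self_iff (c : G) (m : ℕ) :
    (∃ v : G, c * v ^ (m + 1) = v) ↔ c ∈ (powMonoidHom m : G →* G).range := by
  simp_rw [mul_pow_succ_eq_self_iff, MonoidHom.mem_range, powMonoidHom_apply]
  exact ⟨fun ⟨v, hv⟩ => ⟨v⁻¹, hv.symm⟩, fun ⟨w, hw⟩ => ⟨w⁻¹, by rw [inv_inv, hw]⟩⟩

theorem IsCyclic.card_filter_exists_mul_pow_succ_eq_self [Fintype G] [DecidableEq G]
    [IsCyclic G] (m : ℕ) :
    #{c : G | ∃ v : G, c * v ^ (m + 1) = v} = Nat.card G / (Nat.card G).gcd m := by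
  rw [← IsCyclic.card_powMonoidHom_range, ← Nat.card_eq_finsetCard]
  congr
  ext c
  simp [exists_mul_pow_succ_eq_self_iff]

end CommGroup

theorem card_filter_exists_semilinear_fixed (F : Type*) [Field F] [Fintype F] [DecidableEq F]
    {d : ℕ} (hcard : Fintype.card F = d ^ 2) :
    #{x : Fˣ × Bool | ∃ v : Fˣ, (if x.2 then x.1 * v ^ d else x.1 * v) = v} = d + 2 := by
  have hd := one_lt_of_card_eq_sq hcard
  obtain ⟨m, rfl⟩ : ∃ m, d = m + 1 := ⟨d - 1, by omega⟩
  have hunits : Nat.card Fˣ = (m + 2) * m := by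
    rw [Nat.card_eq_fintype_card, Fintype.card_units, hcard]
    exact Nat.sub_eq_of_eq_add (by ring)
  have hlinear : #{c : Fˣ | ∃ v : Fˣ, c * v = v} = 1 := by
    simp [mul_eq_right, filter_eq']
  have hsemilinear : #{c : Fˣ | ∃ v : Fˣ, c * v ^ (m + 1) = v} = m + 2 := by
    rw [IsCyclic.card_filter_exists_mul_pow_succ_eq_self, hunits,
      Nat.gcd_eq_right (dvd_mul_left m _), Nat.mul_div_cancel _ (by omega)]
  rw [card_filter_prod_bool]
  simp only [Bool.false_eq_true, if_false, if_true, hlinear, hsemilinear]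
  omega

theorem stmt_16_general (F : Type*) [Field F] [Fintype F] [DecidableEq F]
    (p e : ℕ) (hcard : Fintype.card F = p ^ (2 * e)) :
    ((univ.filter (fun x : Fˣ × Bool =>
        ∃ v : Fˣ, (if x.2 then x.1 * v ^ (p ^ e) else x.1 * v) = v)).card : ℝ) /
      (2 * ((Fintype.card F : ℝ) - 1)) =
      1 / (2 * ((p : ℝ) ^ e - 1)) + 1 / (2 * ((p : ℝ) ^ (2 * e) - 1)) := by
  have hsq : Fintype.card F = (p ^ e) ^ 2 := by rw [hcard, ← pow_mul, mul_comm]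
  have hd : (1 : ℝ) < p ^ e := by exact_mod_cast one_lt_of_card_eq_sq hsq
  rw [card_filter_exists_semilinear_fixed F hsq, hsq, pow_mul']
  push_cast
  have : (p : ℝ) ^ e - 1 ≠ 0 := by linarith
  have : ((p : ℝ) ^ e) ^ 2 - 1 ≠ 0 := by nlinarith
  field_simp
  ring

/-- let `q = p^{2e}` and `G = GL_1(q) ⋊ ⟨σ⟩` where `σ : x ↦ x^{p^e}` is the
`√q`-power automorphism, acting on `V = F_q` by `v ↦ c · v^{(p^e)^k}`. The proportion of
elements of `G` fixing a nonzero vector equals `1/(2(√q - 1)) + 1/(2(q - 1))`. -/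
theorem stmt_16 (F : Type*) [Field F] [Fintype F] [DecidableEq F]
    (p e : ℕ) (hp : p.Prime) (he : 1 ≤ e) (hcard : Fintype.card F = p ^ (2 * e)) :
    ((univ.filter (fun x : Fˣ × Bool =>
        ∃ v : Fˣ, (if x.2 then x.1 * v ^ (p ^ e) else x.1 * v) = v)).card : ℝ) /
      (2 * ((Fintype.card F : ℝ) - 1)) =
      1 / (2 * ((p : ℝ) ^ e - 1)) + 1 / (2 * ((p : ℝ) ^ (2 * e) - 1)) :=
  stmt_16_general F p e hcard
end

section
/- Let H ≤ GL_1(q) with |H| = t, let x ∈ GL_1(q), let m be the order of xH in GL_1(q)/H, and write m = (q-1)/(tC). Let ℓ be a divisor of f where q = p^f. Then x^{(p^ℓ-1)/(p-1)} is a (p^ℓ - 1)-th power modulo H if and only if for every prime r, min{γ_r(C) + γ_r(m), γ_r(p^ℓ - 1)} ≤ γ_r(C) + min{γ_r(m), γ_r((p^ℓ-1)/(p-1))}. -/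
/-!
`Fˣ ⧸ H` is cyclic of order `N = mC`. In a cyclic group of order `N`, `z` is an `n`-th power
iff `z ^ (N / gcd(N, n)) = 1`. So, with `n = p^ℓ - 1` and `s = n / (p - 1)`, `xH ^ s` is an
`n`-th power iff `m ∣ s · mC / gcd(mC, n)`, i.e. `gcd(mC, n) ∣ sC`. As `gcd(mC, n) ∣ mC`, this
means `gcd(mC, n) ∣ gcd(mC, sC) = C · gcd(m, s)`: the stated comparison of `r`-adic valuations.
-/

namespace IsCyclic

variable {G : Type*} [CommGroup G] [Finite G] [IsCyclic G]

theorem range_powMonoidHom_eq_ker (n : ℕ) :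
    (powMonoidHom n : G →* G).range =
      (powMonoidHom (Nat.card G / (Nat.card G).gcd n) : G →* G).ker := by
  have hdvd : Nat.card G / (Nat.card G).gcd n ∣ Nat.card G :=
    Nat.div_dvd_of_dvd (Nat.gcd_dvd_left _ _)
  refine Subgroup.eq_of_le_of_card_ge ?_ ?_
  · rintro _ ⟨y, rfl⟩
    rw [MonoidHom.mem_ker, powMonoidHom_apply, powMonoidHom_apply, ← pow_mul,
      ← Nat.mul_div_assoc _ (Nat.gcd_dvd_left _ _), mul_comm,
      Nat.mul_div_assoc _ (Nat.gcd_dvd_right _ _), pow_mul, pow_card_eq_one', one_pow]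
  · rw [card_powMonoidHom_ker, card_powMonoidHom_range, Nat.gcd_eq_right hdvd]

theorem exists_pow_eq_iff (n : ℕ) (z : G) :
    (∃ y : G, y ^ n = z) ↔ z ^ (Nat.card G / (Nat.card G).gcd n) = 1 :=
  SetLike.ext_iff.mp (range_powMonoidHom_eq_ker n) z

theorem exists_pow_eq_pow_iff (n s : ℕ) (x : G) :
    (∃ y : G, y ^ n = x ^ s) ↔ (Nat.card G).gcd n * orderOf x ∣ s * Nat.card G := by
  rw [exists_pow_eq_iff, ← pow_mul, ← orderOf_dvd_iff_pow_eq_one,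
    ← Nat.mul_div_assoc _ (Nat.gcd_dvd_left _ _),
    Nat.dvd_div_iff_mul_dvd (dvd_mul_of_dvd_right (Nat.gcd_dvd_left _ _) _)]

end IsCyclic

theorem padicValNat_gcd {r a b : ℕ} [Fact r.Prime] (ha : a ≠ 0) (hb : b ≠ 0) :
    padicValNat r (a.gcd b) = min (padicValNat r a) (padicValNat r b) := by
  have hr := (Fact.out : r.Prime)
  rw [← Nat.factorization_def _ hr, ← Nat.factorization_def _ hr, ← Nat.factorization_def _ hr,
    Nat.factorization_gcd ha hb, Finsupp.inf_apply]

theorem dvd_iff_forall_padicValNat_le {a b : ℕ} (ha : a ≠ 0) (hb : b ≠ 0) :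
    a ∣ b ↔ ∀ r : ℕ, r.Prime → padicValNat r a ≤ padicValNat r b := by
  rw [← Nat.factorization_prime_le_iff_dvd ha hb]
  refine forall₂_congr fun r hr => ?_
  rw [Nat.factorization_def _ hr, Nat.factorization_def _ hr]

theorem Nat.dvd_mul_iff_dvd_mul_gcd {d m s C : ℕ} (hd : d ∣ m * C) :
    d ∣ s * C ↔ d ∣ C * m.gcd s := by
  rw [← Nat.gcd_mul_left, mul_comm C m, mul_comm C s, Nat.dvd_gcd_iff, and_iff_right hd]

theorem stmt_18_general (F : Type*) [Field F] [Fintype F]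
    (p f ℓ t m C : ℕ) (hp : p.Prime) (hcard : Fintype.card F = p ^ f)
    (hℓ1 : 1 ≤ ℓ)
    (H : Subgroup Fˣ) (ht : Nat.card H = t)
    (x : Fˣ) (hm : m = orderOf (QuotientGroup.mk x : Fˣ ⧸ H))
    (hC : m * (t * C) = p ^ f - 1) :
    (∃ y : Fˣ ⧸ H, y ^ (p ^ ℓ - 1) =
        (QuotientGroup.mk x : Fˣ ⧸ H) ^ ((p ^ ℓ - 1) / (p - 1))) ↔
      ∀ r : ℕ, r.Prime →
        min (padicValNat r C + padicValNat r m) (padicValNat r (p ^ ℓ - 1)) ≤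
          padicValNat r C +
            min (padicValNat r m) (padicValNat r ((p ^ ℓ - 1) / (p - 1))) := by
  have hcardQ : Nat.card (Fˣ ⧸ H) = m * C := by
    have hsplit := Subgroup.card_eq_card_quotient_mul_card_subgroup H
    rw [Nat.card_units, Nat.card_eq_fintype_card, hcard, ht, ← hC] at hsplit
    refine Nat.eq_of_mul_eq_mul_right (ht ▸ Nat.card_pos) ?_
    rw [← hsplit]; ring
  have hm0 : m ≠ 0 := hm ▸ (orderOf_pos _).ne'
  have hC0 : C ≠ 0 := right_ne_zero_of_mul (hcardQ ▸ Nat.card_pos.ne')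
  have hp2 := hp.two_le
  have hpℓ : p - 1 ≤ p ^ ℓ - 1 := Nat.sub_le_sub_right (Nat.le_self_pow (by omega) p) 1
  have hn0 : p ^ ℓ - 1 ≠ 0 := by omega
  have hs0 : (p ^ ℓ - 1) / (p - 1) ≠ 0 := (Nat.div_pos hpℓ (by omega)).ne'
  rw [IsCyclic.exists_pow_eq_pow_iff (G := Fˣ ⧸ H), hcardQ, ← hm, mul_left_comm, mul_comm _ m,
    Nat.mul_dvd_mul_iff_left (Nat.pos_of_ne_zero hm0),
    Nat.dvd_mul_iff_dvd_mul_gcd (Nat.gcd_dvd_left _ _),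
    dvd_iff_forall_padicValNat_le (Nat.gcd_ne_zero_right hn0)
      (mul_ne_zero hC0 (Nat.gcd_ne_zero_left hm0))]
  refine forall₂_congr fun r hr => ?_
  have := Fact.mk hr
  rw [padicValNat.mul hC0 (Nat.gcd_ne_zero_left hm0), padicValNat_gcd hm0 hs0,
    padicValNat_gcd (mul_ne_zero hm0 hC0) hn0, padicValNat.mul hm0 hC0,
    add_comm (padicValNat r m)]

/-- with `H ≤ GL_1(q) = F_q^×` of order `t`, `x ∈ F_q^×`, `m` the order of
`xH` in `F_q^×/H`, and `C = (q-1)/(tm)`, for a divisor `ℓ` of `f` (where `q = p^f`):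
`x^{(p^ℓ-1)/(p-1)}` is a `(p^ℓ-1)`-th power modulo `H` if and only if for every prime `r`,
`min(γ_r(C) + γ_r(m), γ_r(p^ℓ-1)) ≤ γ_r(C) + min(γ_r(m), γ_r((p^ℓ-1)/(p-1)))`. -/
theorem stmt_18 (F : Type*) [Field F] [Fintype F]
    (p f ℓ t m C : ℕ) (hp : p.Prime) (hf : 1 ≤ f) (hcard : Fintype.card F = p ^ f)
    (hℓ : ℓ ∣ f) (hℓ1 : 1 ≤ ℓ)
    (H : Subgroup Fˣ) (ht : Nat.card H = t)
    (x : Fˣ) (hm : m = orderOf (QuotientGroup.mk x : Fˣ ⧸ H))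
    (hC : m * (t * C) = p ^ f - 1) :
    (∃ y : Fˣ ⧸ H, y ^ (p ^ ℓ - 1) =
        (QuotientGroup.mk x : Fˣ ⧸ H) ^ ((p ^ ℓ - 1) / (p - 1))) ↔
      ∀ r : ℕ, r.Prime →
        min (padicValNat r C + padicValNat r m) (padicValNat r (p ^ ℓ - 1)) ≤
          padicValNat r C +
            min (padicValNat r m) (padicValNat r ((p ^ ℓ - 1) / (p - 1))) :=
  stmt_18_general F p f ℓ t m C hp hcard hℓ1 H ht x hm hC
end

section
/- Let G ≤ ΓL_1(q) with H = G ∩ GL_1(q) of order t, and suppose G = ⟨H, z⟩ where z = τ x with τ the p-power map and x ∈ GL_1(q). Fix a proper divisor ℓ of f (q = p^f). If some element of the coset z^ℓ H fixes a nonzero vector of F_q, then the number of elements of z^ℓ H fixing a nonzero vector equals gcd((q-1)/(p^ℓ-1), t). -/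
/-- In a finite cyclic group, the number of solutions of `u ^ k = 1` is `k`,
for any divisor `k` of the group order. -/
lemma aux_count_pow_eq_one {G : Type*} [Group G] [Fintype G] [IsCyclic G]
    (k : ℕ) (hk0 : 0 < k) (hk : k ∣ Fintype.card G) :
    {u : G | u ^ k = 1}.ncard = k := by
  obtain ⟨ζ, hζ⟩ := IsCyclic.exists_generator (α := G)
  have hord : orderOf ζ = Fintype.card G := by
    rw [orderOf_eq_card_of_forall_mem_zpowers hζ, Nat.card_eq_fintype_card]
  have hn0 : 0 < Fintype.card G := Fintype.card_pos
  have hset : {u : G | u ^ k = 1} =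
      (Subgroup.zpowers (ζ ^ (Fintype.card G / k)) : Set G) := by
    ext u
    simp only [Set.mem_setOf_eq, SetLike.mem_coe]
    constructor
    · intro hu
      obtain ⟨a, ha⟩ := (mem_powers_iff_mem_zpowers).mpr (hζ u)
      have ha' : ζ ^ a = u := ha
      have h1 : ζ ^ (a * k) = 1 := by rw [pow_mul, ha', hu]
      have h2 : Fintype.card G ∣ a * k := by
        rw [← hord]; exact orderOf_dvd_of_pow_eq_one h1
      have h3 : (Fintype.card G / k) * k ∣ a * k := by rwa [Nat.div_mul_cancel hk]
      obtain ⟨c, hc⟩ := (Nat.mul_dvd_mul_iff_right hk0).mp h3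
      refine ⟨(c : ℤ), ?_⟩
      show (ζ ^ (Fintype.card G / k)) ^ (c : ℤ) = u
      rw [zpow_natCast, ← pow_mul, ← hc, ha']
    · rintro ⟨b, rfl⟩
      show ((ζ ^ (Fintype.card G / k)) ^ b) ^ k = 1
      have h1 : ((ζ ^ (Fintype.card G / k)) ^ k) = 1 := by
        rw [← pow_mul, Nat.div_mul_cancel hk, pow_card_eq_one]
      calc ((ζ ^ (Fintype.card G / k)) ^ b) ^ k
          = ((ζ ^ (Fintype.card G / k)) ^ k) ^ b := by
            rw [← zpow_natCast ((ζ ^ (Fintype.card G / k)) ^ b), ← zpow_mul,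
              mul_comm, zpow_mul, zpow_natCast]
        _ = 1 := by rw [h1, one_zpow]
  rw [hset]
  have h4 : orderOf (ζ ^ (Fintype.card G / k)) = k := by
    rw [orderOf_pow, hord, Nat.gcd_eq_right (Nat.div_dvd_of_dvd hk),
      Nat.div_div_self hk hn0.ne']
  rw [← Nat.card_coe_set_eq, SetLike.coe_sort_coe, Nat.card_zpowers, h4]

/-- let `G = ⟨H, z⟩ ≤ ΓL_1(q)` with `z = τx`, `τ` the `p`-power map,
`H ≤ F_q^×` of order `t`, and `ℓ` a proper divisor of `f` (where `q = p^f`). The elements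
of the coset `z^ℓ H` act on `F_q` by `v ↦ v^{p^ℓ}·y·h` with `y = x^{(p^ℓ-1)/(p-1)}`.
If some element of `z^ℓ H` fixes a nonzero vector, then the number of elements of
`z^ℓ H` fixing a nonzero vector equals `gcd((q-1)/(p^ℓ-1), t)`. -/
theorem stmt_19 (F : Type*) [Field F] [Fintype F]
    (p f ℓ t : ℕ) (hp : p.Prime) (hcard : Fintype.card F = p ^ f)
    (hℓ : ℓ ∣ f) (hℓf : ℓ < f) (hℓ1 : 1 ≤ ℓ)
    (H : Subgroup Fˣ) (ht : Nat.card H = t)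
    (x : Fˣ) (y : Fˣ) (hy : y = x ^ ((p ^ ℓ - 1) / (p - 1)))
    (hnonempty : ∃ h ∈ H, ∃ v : Fˣ, v ^ (p ^ ℓ) * y * h = v) :
    {h ∈ (H : Set Fˣ) | ∃ v : Fˣ, v ^ (p ^ ℓ) * y * h = v}.ncard =
      Nat.gcd ((p ^ f - 1) / (p ^ ℓ - 1)) t := by
  haveI : Fintype Fˣ := Fintype.ofFinite Fˣ
  -- basic numerology
  set n : ℕ := p ^ f - 1 with hn
  set d : ℕ := p ^ ℓ - 1 with hd
  set m : ℕ := n / d with hmdef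
  have hp2 : 2 ≤ p := hp.two_le
  have hpl1 : 1 < p ^ ℓ := one_lt_pow₀ (by omega) (by omega)
  have hpf1 : 1 < p ^ f := one_lt_pow₀ (by omega) (by omega)
  have hd0 : 0 < d := by omega
  have hn0 : 0 < n := by omega
  have hdn : d ∣ n := by
    obtain ⟨k, rfl⟩ := hℓ
    have := Nat.sub_dvd_pow_sub_pow (p ^ ℓ) 1 k
    simpa [← pow_mul] using this
  have hdm : d * m = n := Nat.mul_div_cancel' hdn
  have hm0 : 0 < m := Nat.div_pos (Nat.le_of_dvd hn0 hdn) hd0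
  have hcardU : Fintype.card Fˣ = n := by
    rw [← Nat.card_eq_fintype_card, Nat.card_units, Nat.card_eq_fintype_card, hcard]
  -- key equivalence: fixing a nonzero vector ↔ (y*h)^m = 1
  have key : ∀ h : Fˣ, (∃ v : Fˣ, v ^ (p ^ ℓ) * y * h = v) ↔ (y * h) ^ m = 1 := by
    intro h
    constructor
    · rintro ⟨v, hv⟩
      have hw : y * h = (v ^ (p ^ ℓ))⁻¹ * v := by
        symm
        rw [inv_mul_eq_iff_eq_mul, ← mul_assoc]
        exact hv.symm
      have hplm : p ^ ℓ * m = n + m := by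
        have hpd : p ^ ℓ = d + 1 := by omega
        rw [hpd, add_mul, hdm, one_mul]
      have hvn : v ^ n = 1 := by rw [← hcardU, pow_card_eq_one]
      rw [hw]
      calc ((v ^ (p ^ ℓ))⁻¹ * v) ^ m = (v ^ (p ^ ℓ * m))⁻¹ * v ^ m := by
            rw [mul_pow, inv_pow, pow_mul]
        _ = (v ^ n * v ^ m)⁻¹ * v ^ m := by rw [hplm, pow_add]
        _ = 1 := by rw [hvn, one_mul, inv_mul_cancel]
    · intro hw
      obtain ⟨ζ, hζ⟩ := IsCyclic.exists_generator (α := Fˣ)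
      have hord : orderOf ζ = n := by
        rw [orderOf_eq_card_of_forall_mem_zpowers hζ, Nat.card_eq_fintype_card, hcardU]
      obtain ⟨a, ha⟩ := (mem_powers_iff_mem_zpowers).mpr (hζ (y * h))
      have ha' : ζ ^ a = y * h := ha
      have h1 : ζ ^ (a * m) = 1 := by rw [pow_mul, ha', hw]
      have h2 : d * m ∣ a * m := by
        rw [hdm, ← hord]; exact orderOf_dvd_of_pow_eq_one h1
      obtain ⟨c, hc⟩ := (Nat.mul_dvd_mul_iff_right hm0).mp h2
      set u : Fˣ := ζ ^ c with hu
      have hwu : y * h = u ^ d := by rw [hu, ← pow_mul, mul_comm c d, ← hc, ha']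
      refine ⟨u⁻¹, ?_⟩
      have hpd : p ^ ℓ = d + 1 := by omega
      rw [mul_assoc, hwu, hpd]
      group
  -- membership in H ↔ h^t = 1
  have ht0 : 0 < t := by rw [← ht]; exact Nat.card_pos
  have htn : t ∣ n := by
    rw [← ht, ← hcardU, ← Nat.card_eq_fintype_card]
    exact Subgroup.card_subgroup_dvd_card H
  have hHsub : (H : Set Fˣ) ⊆ {u : Fˣ | u ^ t = 1} := by
    intro h hh
    have h1 : (⟨h, hh⟩ : H) ^ t = 1 := by
      rw [← ht]; exact pow_card_eq_one'
    have := congrArg (Subgroup.subtype H) h1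
    simpa using this
  have hHset : (H : Set Fˣ) = {u : Fˣ | u ^ t = 1} := by
    apply Set.eq_of_subset_of_ncard_le hHsub
    rw [aux_count_pow_eq_one t ht0 (by rw [hcardU]; exact htn),
      ← Nat.card_coe_set_eq, SetLike.coe_sort_coe, ht]
  have hmemH : ∀ h : Fˣ, h ∈ H ↔ h ^ t = 1 := by
    intro h
    constructor
    · intro hh; exact hHsub hh
    · intro hh; rw [← SetLike.mem_coe, hHset]; exact hh
  -- translate by the given element h₀
  obtain ⟨h₀, hh₀H, hfix₀⟩ := hnonempty
  have hh₀t : h₀ ^ t = 1 := (hmemH h₀).mp hh₀H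
  have hyh₀ : (y * h₀) ^ m = 1 := (key h₀).mp hfix₀
  set g : ℕ := Nat.gcd m t with hg
  have hSeq : {h ∈ (H : Set Fˣ) | ∃ v : Fˣ, v ^ (p ^ ℓ) * y * h = v}
      = (fun u => h₀ * u) '' {u : Fˣ | u ^ g = 1} := by
    ext h
    simp only [Set.mem_setOf_eq, Set.mem_image, SetLike.mem_coe]
    constructor
    · rintro ⟨hhH, hfix⟩
      refine ⟨h₀⁻¹ * h, ?_, by group⟩
      have h1 : h ^ t = 1 := (hmemH h).mp hhH
      have h2 : (y * h) ^ m = 1 := (key h).mp hfix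
      have hut : (h₀⁻¹ * h) ^ t = 1 := by
        rw [mul_pow, inv_pow, h1, hh₀t, inv_one, one_mul]
      have e1 : y ^ m * h ^ m = 1 := by rw [← mul_pow]; exact h2
      have e2 : y ^ m * h₀ ^ m = 1 := by rw [← mul_pow]; exact hyh₀
      have e3 : h ^ m = h₀ ^ m := mul_left_cancel (e1.trans e2.symm)
      have hum : (h₀⁻¹ * h) ^ m = 1 := by
        rw [mul_pow, inv_pow, e3, inv_mul_cancel]
      have hou : orderOf (h₀⁻¹ * h) ∣ g :=
        Nat.dvd_gcd (orderOf_dvd_of_pow_eq_one hum) (orderOf_dvd_of_pow_eq_one hut)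
      exact orderOf_dvd_iff_pow_eq_one.mp hou
    · rintro ⟨u, hug, rfl⟩
      have hou : orderOf u ∣ g := orderOf_dvd_of_pow_eq_one hug
      have hut : u ^ t = 1 :=
        orderOf_dvd_iff_pow_eq_one.mp (hou.trans (Nat.gcd_dvd_right m t))
      have hum : u ^ m = 1 :=
        orderOf_dvd_iff_pow_eq_one.mp (hou.trans (Nat.gcd_dvd_left m t))
      constructor
      · rw [hmemH, mul_pow, hh₀t, hut, one_mul]
      · rw [key, ← mul_assoc, mul_pow, hyh₀, hum, one_mul]
  have hg0 : 0 < g := Nat.gcd_pos_of_pos_left t hm0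
  have hgn : g ∣ n := (Nat.gcd_dvd_right m t).trans htn
  rw [hSeq, Set.ncard_image_of_injective _ (mul_right_injective h₀),
    aux_count_pow_eq_one g hg0 (by rw [hcardU]; exact hgn)]
end
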